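/- arXiv:2505.16511 — 7 statements merged into one kernel-verified Lean document; each statement's English description precedes it below -/
import Mathlib

section
/- For every c > 0 and all a, b ∈ [−c, c], (tanh(a) − tanh(b) − (1 − tanh(c)²)·(a − b))·(tanh(a) − tanh(b) − (a − b)) ≤ 0; that is, the hyperbolic tangent is incrementally sector bounded by [1 − tanh(c)², 1] on the interval [−c, c]. -/
/-!
On `[-c, c]` the derivative `tanh' = 1 / cosh² = 1 - tanh²` lies in `[1 - tanh² c, 1]`, since `cosh`
increases with `|x|`. By the mean value theorem every difference quotient of `tanh` on `[-c, c]`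
then lies in this interval, which is exactly the sector condition.
-/

open Set

def IncrementallySectorBounded (φ : ℝ → ℝ) (α β : ℝ) (D : Set ℝ) : Prop :=
  ∀ a ∈ D, ∀ b ∈ D, (φ a - φ b - α * (a - b)) * (φ a - φ b - β * (a - b)) ≤ 0

theorem Convex.incrementallySectorBounded_of_deriv_mem_Icc {D : Set ℝ} (hD : Convex ℝ D)
    {f : ℝ → ℝ} (hf : ContinuousOn f D) (hf' : DifferentiableOn ℝ f (interior D)) {α β : ℝ}
    (hderiv : ∀ x ∈ interior D, deriv f x ∈ Icc α β) :
    IncrementallySectorBounded f α β D := by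
  intro a ha b hb
  wlog hba : b ≤ a generalizing a b
  · convert this b hb a ha (le_of_not_ge hba) using 1
    ring
  have hlower :=
    hD.mul_sub_le_image_sub_of_le_deriv hf hf' (fun x hx => (hderiv x hx).1) b hb a ha hba
  have hupper :=
    hD.image_sub_le_mul_sub_of_deriv_le hf hf' (fun x hx => (hderiv x hx).2) b hb a ha hba
  exact mul_nonpos_of_nonneg_of_nonpos (by linarith) (by linarith)

namespace Real

theorem one_sub_tanh_sq (x : ℝ) : 1 - tanh x ^ 2 = (cosh x ^ 2)⁻¹ := by
  have hcosh : cosh x ≠ 0 := (cosh_pos x).ne'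
  rw [tanh_eq_sinh_div_cosh]
  field_simp
  linarith [cosh_sq_sub_sinh_sq x]

theorem hasDerivAt_tanh (x : ℝ) : HasDerivAt tanh (cosh x ^ 2)⁻¹ x := by
  have hquot := (hasDerivAt_sinh x).div (hasDerivAt_cosh x) (cosh_pos x).ne'
  have hnum : cosh x * cosh x - sinh x * sinh x = 1 := by
    linear_combination cosh_sq_sub_sinh_sq x
  rwa [hnum, one_div, show sinh / cosh = tanh from funext fun y => (tanh_eq_sinh_div_cosh y).symm]
    at hquot

theorem deriv_tanh (x : ℝ) : deriv tanh x = (cosh x ^ 2)⁻¹ :=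
  (hasDerivAt_tanh x).deriv

theorem differentiable_tanh : Differentiable ℝ tanh :=
  fun x => (hasDerivAt_tanh x).differentiableAt

theorem tanh_incrementallySectorBounded (c : ℝ) :
    IncrementallySectorBounded tanh (1 - tanh c ^ 2) 1 (Icc (-c) c) := by
  refine (convex_Icc (-c) c).incrementallySectorBounded_of_deriv_mem_Icc
    differentiable_tanh.continuous.continuousOn differentiable_tanh.differentiableOn
    fun x hx => ?_
  have hxc : |x| ≤ |c| :=
    (abs_le.mpr (interior_subset hx : x ∈ Icc (-c) c)).trans (le_abs_self c)
  rw [deriv_tanh, one_sub_tanh_sq]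
  exact ⟨inv_anti₀ (by positivity) (pow_le_pow_left₀ (cosh_pos x).le (cosh_le_cosh.mpr hxc) 2),
    inv_le_one_of_one_le₀ (one_le_pow₀ (one_le_cosh x))⟩

end Real

theorem tanh_incremental_sector_bound_general
    (c : ℝ) (a b : ℝ)
    (ha : a ∈ Set.Icc (-c) c) (hb : b ∈ Set.Icc (-c) c) :
    (Real.tanh a - Real.tanh b - (1 - Real.tanh c ^ 2) * (a - b)) *
      (Real.tanh a - Real.tanh b - (a - b)) ≤ 0 := by
  simpa using Real.tanh_incrementallySectorBounded c a ha b hb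

/-- `tanh` is incrementally sector bounded by `[1 - tanh(c)², 1]` on `[-c, c]`
for every `c > 0`. -/
theorem tanh_incremental_sector_bound
    (c : ℝ) (hc : 0 < c) (a b : ℝ)
    (ha : a ∈ Set.Icc (-c) c) (hb : b ∈ Set.Icc (-c) c) :
    (Real.tanh a - Real.tanh b - (1 - Real.tanh c ^ 2) * (a - b)) *
      (Real.tanh a - Real.tanh b - (a - b)) ≤ 0 :=
  tanh_incremental_sector_bound_general c a b ha hb
end

section
/- Consider layer widths m₀, m₁, …, mₖ, weight matrices W^{i+1} ∈ ℝ^{m_{i+1}×m_i} and bias vectors b^{i+1} ∈ ℝ^{m_{i+1}} for i = 0,…,k−1, and layer maps Φ^{i+1} : ℝ^{m_{i+1}} → ℝ^{m_{i+1}} acting componentwise, where the j-th scalar function of layer i+1 is incrementally sector bounded by [α^{i+1}_j, β^{i+1}_j] on ℝ; set K₁^{i+1} = diag(α^{i+1}_1,…,α^{i+1}_{m_{i+1}}) and K₂^{i+1} = diag(β^{i+1}_1,…,β^{i+1}_{m_{i+1}}). For inputs x₁, x₂ ∈ ℝ^{m₀}, define w_ℓ⁰ = x_ℓ and w_ℓ^{i+1}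 = Φ^{i+1}(W^{i+1} w_ℓ^{i} + b^{i+1}) for ℓ = 1, 2. Then Σ_{i=0}^{k−1} ⟨(w₁^{i+1} − w₂^{i+1}) − K₁^{i+1} W^{i+1}(w₁^{i} − w₂^{i}), (w₁^{i+1} − w₂^{i+1}) − K₂^{i+1} W^{i+1}(w₁^{i} − w₂^{i})⟩ ≤ 0, where ⟨·,·⟩ is the Euclidean inner product. -/
open Matrix

/-- Layer maps of a feedforward neural network with componentwise activations:
`w⁰(x) = x`, `w^{i+1}(x)_j = φ^{i+1}_j((W^{i+1} w^i(x))_j + b^{i+1}_j)`.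
Here `W i`, `b i`, `φ i` are the weights, biases and activations mapping layer `i`
to layer `i+1`. -/
noncomputable def nnLayer (m : ℕ → ℕ)
    (W : (i : ℕ) → Matrix (Fin (m (i + 1))) (Fin (m i)) ℝ)
    (b : (i : ℕ) → Fin (m (i + 1)) → ℝ)
    (φ : (i : ℕ) → Fin (m (i + 1)) → ℝ → ℝ) :
    (i : ℕ) → (Fin (m 0) → ℝ) → Fin (m i) → ℝ
  | 0, x => x
  | i + 1, x => fun j => φ i j ((W i).mulVec (nnLayer m W b φ i x) j + b i j)

/-- Lemma 1: the summed incremental sector bound over all layers. -/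
theorem multilayer_incremental_sector_bound
    (k : ℕ) (m : ℕ → ℕ)
    (W : (i : ℕ) → Matrix (Fin (m (i + 1))) (Fin (m i)) ℝ)
    (b : (i : ℕ) → Fin (m (i + 1)) → ℝ)
    (φ : (i : ℕ) → Fin (m (i + 1)) → ℝ → ℝ)
    (α β : (i : ℕ) → Fin (m (i + 1)) → ℝ)
    (hsec : ∀ i j, ∀ a c : ℝ,
      (φ i j a - φ i j c - α i j * (a - c)) * (φ i j a - φ i j c - β i j * (a - c)) ≤ 0)
    (x₁ x₂ : Fin (m 0) → ℝ) :
    ∑ i ∈ Finset.range k,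
      ((nnLayer m W b φ (i + 1) x₁ - nnLayer m W b φ (i + 1) x₂)
          - (Matrix.diagonal (α i)).mulVec
              ((W i).mulVec (nnLayer m W b φ i x₁ - nnLayer m W b φ i x₂))) ⬝ᵥ
      ((nnLayer m W b φ (i + 1) x₁ - nnLayer m W b φ (i + 1) x₂)
          - (Matrix.diagonal (β i)).mulVec
              ((W i).mulVec (nnLayer m W b φ i x₁ - nnLayer m W b φ i x₂))) ≤ 0 := by
  apply Finset.sum_nonpos
  intro i _
  rw [dotProduct]
  apply Finset.sum_nonpos
  intro j _
  simp only [Pi.sub_apply, Matrix.mulVec_diagonal, Matrix.mulVec_sub, nnLayer]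
  have h := hsec i j ((W i).mulVec (nnLayer m W b φ i x₁) j + b i j)
    ((W i).mulVec (nnLayer m W b φ i x₂) j + b i j)
  calc _ = (φ i j ((W i).mulVec (nnLayer m W b φ i x₁) j + b i j)
        - φ i j ((W i).mulVec (nnLayer m W b φ i x₂) j + b i j)
        - α i j * (((W i).mulVec (nnLayer m W b φ i x₁) j + b i j)
          - ((W i).mulVec (nnLayer m W b φ i x₂) j + b i j))) *
      (φ i j ((W i).mulVec (nnLayer m W b φ i x₁) j + b i j)
        - φ i j ((W i).mulVec (nnLayer m W b φ i x₂) j + b i j)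
        - β i j * (((W i).mulVec (nnLayer m W b φ i x₁) j + b i j)
          - ((W i).mulVec (nnLayer m W b φ i x₂) j + b i j))) := by ring
    _ ≤ 0 := h
end

section
/- Suppose φ : ℝ → ℝ is incrementally sector bounded by [α, β] on ℝ, P ∈ ℝ^{n×n} is symmetric positive definite, and there exist constants 0 < p̲ ≤ p̄ and μ > 0 with p̲·I ⪯ P ⪯ p̄·I such that, with L = P·W² + (α+β)·W¹ᵀ, the symmetric block matrix [[−μ·Iₙ, P, 0], [P, AᵀP + PA − 2αβ·W¹ᵀW¹, L], [0, Lᵀ, −2·I_m]] ⪯ 0. Then any two solutions x₁, x₂ of the Hopfield NODE system satisfy ‖x₁(t) − x₂(t)‖ ≤ √(p̄/p̲) · e^{−(p̲/(2μ))·t} · ‖x₁(0) − x₂(0)‖ for all t ≥ 0. -/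
/-!
For two solutions, the error `e = x₁ - x₂` satisfies `ė = A e + W2 u`, where
`u = Φ(W1 x₁ + b1) - Φ(W1 x₂ + b1)` is componentwise sector bounded against `W1 e`.
Evaluating the LMI at `(μ⁻¹ P e, e, u)` and adding the sector inequality shows that
`V = eᵀ P e` satisfies `V̇ ≤ -μ⁻¹ ‖P e‖² ≤ -(p̲/μ) V`, so `V` decays like `exp (-(p̲/μ) t)` by
Grönwall, and `p̲ ‖e‖² ≤ V ≤ p̄ ‖e‖²` turns this into the claimed bound.
-/

open Matrix

noncomputable def eNorm {n : ℕ} (v : Fin n → ℝ) : ℝ := Real.sqrt (v ⬝ᵥ v)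

section QuadraticForm

variable {ι : Type*} [Fintype ι] [DecidableEq ι] {P : Matrix ι ι ℝ} {c : ℝ}

lemma Matrix.PosSemidef.mul_dotProduct_le_of_sub (h : (P - c • 1).PosSemidef) (v : ι → ℝ) :
    c * (v ⬝ᵥ v) ≤ v ⬝ᵥ (P *ᵥ v) := by
  have hv := h.dotProduct_mulVec_nonneg v
  simp only [star_trivial, sub_mulVec, smul_mulVec, one_mulVec, dotProduct_sub,
    dotProduct_smul, smul_eq_mul] at hv
  linarith

lemma Matrix.PosSemidef.dotProduct_le_mul_of_sub (h : (c • 1 - P).PosSemidef) (v : ι → ℝ) :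
    v ⬝ᵥ (P *ᵥ v) ≤ c * (v ⬝ᵥ v) := by
  have hv := h.dotProduct_mulVec_nonneg v
  simp only [star_trivial, sub_mulVec, smul_mulVec, one_mulVec, dotProduct_sub,
    dotProduct_smul, smul_eq_mul] at hv
  linarith

lemma Matrix.PosSemidef.mul_dotProduct_mulVec_le_of_sub (hc : 0 ≤ c)
    (h : (P - c • 1).PosSemidef) (v : ι → ℝ) :
    c * (v ⬝ᵥ (P *ᵥ v)) ≤ (P *ᵥ v) ⬝ᵥ (P *ᵥ v) := by
  set w := (P - c • 1) *ᵥ v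
  have hPv : P *ᵥ v = w + c • v := by simp [w, sub_mulVec, smul_mulVec]
  have hw : 0 ≤ v ⬝ᵥ w := by simpa using h.dotProduct_mulVec_nonneg v
  have hww : 0 ≤ w ⬝ᵥ w := by simpa using dotProduct_star_self_nonneg w
  rw [hPv]
  simp only [dotProduct_add, add_dotProduct, dotProduct_smul, smul_dotProduct, smul_eq_mul,
    dotProduct_comm w v]
  nlinarith [mul_nonneg hc hw]

end QuadraticForm

lemma sumElim_dotProduct_fromBlocks_mulVec {R ι₁ ι₂ κ : Type*} [CommRing R] [Fintype ι₁]
    [Fintype ι₂] [Fintype κ] (X : Matrix ι₁ ι₁ R) (Y : Matrix ι₁ ι₂ R) (Y' : Matrix ι₂ ι₁ R)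
    (Z : Matrix ι₂ ι₂ R) (L : Matrix ι₂ κ R) (L' : Matrix κ ι₂ R) (N : Matrix κ κ R)
    (w : ι₁ → R) (v : ι₂ → R) (u : κ → R) :
    Sum.elim (Sum.elim w v) u ⬝ᵥ
        (fromBlocks (fromBlocks X Y Y' Z) (fromRows 0 L) (fromCols 0 L') N *ᵥ
          Sum.elim (Sum.elim w v) u) =
      w ⬝ᵥ (X *ᵥ w) + w ⬝ᵥ (Y *ᵥ v) + v ⬝ᵥ (Y' *ᵥ w) + v ⬝ᵥ (Z *ᵥ v)
        + v ⬝ᵥ (L *ᵥ u) + u ⬝ᵥ (L' *ᵥ v) + u ⬝ᵥ (N *ᵥ u) := by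
  simp only [fromBlocks_mulVec, fromRows_mulVec, fromCols_mulVec_sumElim, zero_mulVec,
    sumElim_dotProduct_sumElim, Sum.elim_comp_inl, Sum.elim_comp_inr, dotProduct_add,
    dotProduct_zero, zero_add]
  ring

section Derivatives

variable {ι : Type*} [Fintype ι] {f g : ℝ → ι → ℝ} {f' g' : ι → ℝ} {x : ℝ}

theorem HasDerivAt.dotProduct (hf : HasDerivAt f f' x) (hg : HasDerivAt g g' x) :
    HasDerivAt (fun r => f r ⬝ᵥ g r) (f' ⬝ᵥ g x + f x ⬝ᵥ g') x := by
  have := HasDerivAt.fun_sum fun i (_ : i ∈ Finset.univ) =>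
    (hasDerivAt_pi.1 hf i).fun_mul (hasDerivAt_pi.1 hg i)
  rwa [Finset.sum_add_distrib] at this

theorem HasDerivAt.matrix_mulVec {κ : Type*} (M : Matrix κ ι ℝ) (hf : HasDerivAt f f' x) :
    HasDerivAt (fun r => M *ᵥ f r) (M *ᵥ f') x :=
  hasDerivAt_pi.2 fun i => by
    have := (hasDerivAt_const x (M i)).dotProduct hf
    rwa [zero_dotProduct, zero_add] at this

theorem HasDerivAt.dotProduct_mulVec_self {P : Matrix ι ι ℝ} (hP : P.IsSymm)
    (hf : HasDerivAt f f' x) :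
    HasDerivAt (fun r => f r ⬝ᵥ (P *ᵥ f r)) (2 * (f' ⬝ᵥ (P *ᵥ f x))) x := by
  convert hf.dotProduct (hf.matrix_mulVec P) using 1
  rw [← dotProduct_transpose_mulVec P f', hP.eq, dotProduct_comm f']
  ring

end Derivatives

lemma le_mul_exp_of_hasDerivAt_le_mul {f f' : ℝ → ℝ} {K a : ℝ}
    (hf : ∀ s, a ≤ s → HasDerivAt f (f' s) s) (bound : ∀ s, a ≤ s → f' s ≤ K * f s)
    {t : ℝ} (ht : a ≤ t) : f t ≤ f a * Real.exp (K * (t - a)) := by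
  have h := le_gronwallBound_of_liminf_deriv_right_le (f := f) (f' := f') (ε := 0) (b := t)
    (fun s hs => (hf s hs.1).continuousAt.continuousWithinAt)
    (fun s hs r hr => (hf s hs.1).hasDerivWithinAt.liminf_right_slope_le hr) le_rfl
    (fun s hs => by simpa using bound s hs.1) t ⟨ht, le_rfl⟩
  rwa [gronwallBound_ε0] at h

lemma sub_smul_dotProduct_sub_smul_nonpos {κ : Type*} [Fintype κ] {φ : ℝ → ℝ} {α β : ℝ}
    (hsec : ∀ a c : ℝ, (φ a - φ c - α * (a - c)) * (φ a - φ c - β * (a - c)) ≤ 0)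
    (y z : κ → ℝ) :
    (φ ∘ y - φ ∘ z - α • (y - z)) ⬝ᵥ (φ ∘ y - φ ∘ z - β • (y - z)) ≤ 0 :=
  Finset.sum_nonpos fun j _ => hsec (y j) (z j)

section HopfieldLMI

variable {ι κ : Type*} [Fintype ι] [DecidableEq ι] [Fintype κ] [DecidableEq κ]
  {A P : Matrix ι ι ℝ} {W1 : Matrix κ ι ℝ} {W2 : Matrix ι κ ℝ} {α β μ : ℝ}

def hopfieldLMIMatrix (A P : Matrix ι ι ℝ) (W1 : Matrix κ ι ℝ) (W2 : Matrix ι κ ℝ)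
    (α β μ : ℝ) : Matrix ((ι ⊕ ι) ⊕ κ) ((ι ⊕ ι) ⊕ κ) ℝ :=
  fromBlocks
    (fromBlocks (-μ • (1 : Matrix ι ι ℝ)) P P (Aᵀ * P + P * A - (2 * α * β) • (W1ᵀ * W1)))
    (fromRows (0 : Matrix ι κ ℝ) (P * W2 + (α + β) • W1ᵀ))
    (fromCols (0 : Matrix κ ι ℝ) ((P * W2 + (α + β) • W1ᵀ)ᵀ))
    (-(2 : ℝ) • (1 : Matrix κ κ ℝ))

/-- The LMI is tested against the stacked vector `(μ⁻¹ • P e, e, u)`; twice the sector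
inequality then cancels the `W1`- and `u`-terms. -/
lemma hopfieldLMI_dissipation (hP : P.IsSymm) (hμ : μ ≠ 0)
    (hLMI : (-hopfieldLMIMatrix A P W1 W2 α β μ).PosSemidef) (e : ι → ℝ) (u : κ → ℝ)
    (hsec : (u - α • (W1 *ᵥ e)) ⬝ᵥ (u - β • (W1 *ᵥ e)) ≤ 0) :
    2 * ((A *ᵥ e + W2 *ᵥ u) ⬝ᵥ (P *ᵥ e)) + μ⁻¹ * ((P *ᵥ e) ⬝ᵥ (P *ᵥ e)) ≤ 0 := by
  have hPself (x y : ι → ℝ) : x ⬝ᵥ (P *ᵥ y) = (P *ᵥ x) ⬝ᵥ y := by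
    rw [← dotProduct_transpose_mulVec, hP.eq, dotProduct_comm]
  have h := hLMI.dotProduct_mulVec_nonneg (Sum.elim (Sum.elim (μ⁻¹ • (P *ᵥ e)) e) u)
  rw [star_trivial, neg_mulVec, dotProduct_neg, neg_nonneg, hopfieldLMIMatrix,
    sumElim_dotProduct_fromBlocks_mulVec] at h
  simp only [add_mulVec, sub_mulVec, smul_mulVec, one_mulVec, ← mulVec_mulVec, mulVec_smul,
    dotProduct_add, dotProduct_sub, dotProduct_smul, add_dotProduct, sub_dotProduct,
    smul_dotProduct, smul_eq_mul, transpose_add, transpose_smul, transpose_mul,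
    transpose_transpose, hP.eq, dotProduct_transpose_mulVec] at h hsec ⊢
  simp only [hPself e] at h ⊢
  rw [dotProduct_comm (W1 *ᵥ e) u] at hsec
  rw [dotProduct_comm (A *ᵥ e), dotProduct_comm (W2 *ᵥ u)]
  have hμμ : μ⁻¹ * (-μ * (μ⁻¹ * ((P *ᵥ e) ⬝ᵥ (P *ᵥ e)))) = -(μ⁻¹ * ((P *ᵥ e) ⬝ᵥ (P *ᵥ e))) := by
    field_simp
  rw [hμμ] at h
  linear_combination h + 2 * hsec

end HopfieldLMI

lemma eNorm_le_of_dotProduct_le {n : ℕ} {v w : Fin n → ℝ} {c r : ℝ}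
    (h : v ⬝ᵥ v ≤ c * Real.exp r * (w ⬝ᵥ w)) :
    eNorm v ≤ Real.sqrt c * Real.exp (r / 2) * eNorm w := by
  rw [eNorm, eNorm, Real.exp_half, ← Real.sqrt_mul' _ (Real.exp_pos r).le,
    ← Real.sqrt_mul' _ (by simpa using dotProduct_star_self_nonneg w)]
  exact Real.sqrt_le_sqrt h

theorem hopfield_node_contractive_LMI_general
    (n m : ℕ) (A : Matrix (Fin n) (Fin n) ℝ)
    (W1 : Matrix (Fin m) (Fin n) ℝ) (W2 : Matrix (Fin n) (Fin m) ℝ)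
    (b1 : Fin m → ℝ) (b2 : Fin n → ℝ)
    (φ : ℝ → ℝ) (α β : ℝ)
    (hsec : ∀ a c : ℝ, (φ a - φ c - α * (a - c)) * (φ a - φ c - β * (a - c)) ≤ 0)
    (P : Matrix (Fin n) (Fin n) ℝ) (hP : P.PosDef)
    (p₁ p₂ μ : ℝ) (hp₁ : 0 < p₁) (hμ : 0 < μ)
    (hPlo : (P - p₁ • (1 : Matrix (Fin n) (Fin n) ℝ)).PosSemidef)
    (hPhi : (p₂ • (1 : Matrix (Fin n) (Fin n) ℝ) - P).PosSemidef)
    (hLMI : (-(Matrix.fromBlocks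
        (Matrix.fromBlocks (-μ • (1 : Matrix (Fin n) (Fin n) ℝ)) P
          P (Aᵀ * P + P * A - (2 * α * β) • (W1ᵀ * W1)))
        (Matrix.fromRows (0 : Matrix (Fin n) (Fin m) ℝ) (P * W2 + (α + β) • W1ᵀ))
        (Matrix.fromCols (0 : Matrix (Fin m) (Fin n) ℝ) ((P * W2 + (α + β) • W1ᵀ)ᵀ))
        (-(2 : ℝ) • (1 : Matrix (Fin m) (Fin m) ℝ)))).PosSemidef)
    (x₁ x₂ : ℝ → Fin n → ℝ)
    (hx₁ : ∀ t, 0 ≤ t → HasDerivAt x₁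
      (A.mulVec (x₁ t) + W2.mulVec (fun j => φ (W1.mulVec (x₁ t) j + b1 j)) + b2) t)
    (hx₂ : ∀ t, 0 ≤ t → HasDerivAt x₂
      (A.mulVec (x₂ t) + W2.mulVec (fun j => φ (W1.mulVec (x₂ t) j + b1 j)) + b2) t) :
    ∀ t, 0 ≤ t →
      eNorm (x₁ t - x₂ t) ≤
        Real.sqrt (p₂ / p₁) * Real.exp (-(p₁ / (2 * μ)) * t) * eNorm (x₁ 0 - x₂ 0) := by
  intro t ht
  have hPsymm : P.IsSymm := isHermitian_iff_isSymm.1 hP.isHermitian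
  set e : ℝ → Fin n → ℝ := fun s => x₁ s - x₂ s
  set u : ℝ → Fin m → ℝ := fun s =>
    (fun j => φ ((W1 *ᵥ x₁ s) j + b1 j)) - fun j => φ ((W1 *ᵥ x₂ s) j + b1 j)
  set V : ℝ → ℝ := fun s => e s ⬝ᵥ (P *ᵥ e s)
  have he (s : ℝ) (hs : 0 ≤ s) : HasDerivAt e (A *ᵥ e s + W2 *ᵥ u s) s := by
    refine ((hx₁ s hs).sub (hx₂ s hs)).congr_deriv ?_
    simp only [e, u, mulVec_sub]
    abel
  have hdecay (s : ℝ) (hs : 0 ≤ s) :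
      2 * ((A *ᵥ e s + W2 *ᵥ u s) ⬝ᵥ (P *ᵥ e s)) ≤ -(p₁ / μ) * V s := by
    have hsec' := sub_smul_dotProduct_sub_smul_nonpos hsec (W1 *ᵥ x₁ s + b1) (W1 *ᵥ x₂ s + b1)
    rw [add_sub_add_right_eq_sub, ← mulVec_sub] at hsec'
    have hdiss := hopfieldLMI_dissipation hPsymm hμ.ne' hLMI (e s) (u s) hsec'
    have hPe := mul_le_mul_of_nonneg_left (hPlo.mul_dotProduct_mulVec_le_of_sub hp₁.le (e s))
      (inv_nonneg.2 hμ.le)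
    rw [neg_mul, div_mul_eq_mul_div, div_eq_inv_mul]
    linarith
  have hgronwall := le_mul_exp_of_hasDerivAt_le_mul
    (fun s hs => (he s hs).dotProduct_mulVec_self hPsymm) hdecay ht
  rw [sub_zero] at hgronwall
  rw [show -(p₁ / (2 * μ)) * t = -(p₁ / μ) * t / 2 by ring]
  apply eNorm_le_of_dotProduct_le
  have hlo := hPlo.mul_dotProduct_le_of_sub (e t)
  have hhi := mul_le_mul_of_nonneg_right (hPhi.dotProduct_le_mul_of_sub (e 0))
    (Real.exp_pos (-(p₁ / μ) * t)).le
  rw [div_mul_eq_mul_div, div_mul_eq_mul_div, le_div_iff₀ hp₁]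
  linarith

/-- Theorem 2: contraction of the Hopfield NODE system under the
convex LMI condition. -/
theorem hopfield_node_contractive_LMI
    (n m : ℕ) (A : Matrix (Fin n) (Fin n) ℝ)
    (W1 : Matrix (Fin m) (Fin n) ℝ) (W2 : Matrix (Fin n) (Fin m) ℝ)
    (b1 : Fin m → ℝ) (b2 : Fin n → ℝ)
    (φ : ℝ → ℝ) (α β : ℝ)
    (hsec : ∀ a c : ℝ, (φ a - φ c - α * (a - c)) * (φ a - φ c - β * (a - c)) ≤ 0)
    (P : Matrix (Fin n) (Fin n) ℝ) (hP : P.PosDef)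
    (p₁ p₂ μ : ℝ) (hp₁ : 0 < p₁) (hp₁₂ : p₁ ≤ p₂) (hμ : 0 < μ)
    (hPlo : (P - p₁ • (1 : Matrix (Fin n) (Fin n) ℝ)).PosSemidef)
    (hPhi : (p₂ • (1 : Matrix (Fin n) (Fin n) ℝ) - P).PosSemidef)
    (hLMI : (-(Matrix.fromBlocks
        (Matrix.fromBlocks (-μ • (1 : Matrix (Fin n) (Fin n) ℝ)) P
          P (Aᵀ * P + P * A - (2 * α * β) • (W1ᵀ * W1)))
        (Matrix.fromRows (0 : Matrix (Fin n) (Fin m) ℝ) (P * W2 + (α + β) • W1ᵀ))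
        (Matrix.fromCols (0 : Matrix (Fin m) (Fin n) ℝ) ((P * W2 + (α + β) • W1ᵀ)ᵀ))
        (-(2 : ℝ) • (1 : Matrix (Fin m) (Fin m) ℝ)))).PosSemidef)
    (x₁ x₂ : ℝ → Fin n → ℝ)
    (hx₁ : ∀ t, 0 ≤ t → HasDerivAt x₁
      (A.mulVec (x₁ t) + W2.mulVec (fun j => φ (W1.mulVec (x₁ t) j + b1 j)) + b2) t)
    (hx₂ : ∀ t, 0 ≤ t → HasDerivAt x₂
      (A.mulVec (x₂ t) + W2.mulVec (fun j => φ (W1.mulVec (x₂ t) j + b1 j)) + b2) t) :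
    ∀ t, 0 ≤ t →
      eNorm (x₁ t - x₂ t) ≤
        Real.sqrt (p₂ / p₁) * Real.exp (-(p₁ / (2 * μ)) * t) * eNorm (x₁ 0 - x₂ 0) :=
  hopfield_node_contractive_LMI_general n m A W1 W2 b1 b2 φ α β hsec P hP p₁ p₂ μ hp₁ hμ hPlo hPhi
    hLMI x₁ x₂ hx₁ hx₂
end

section
/- Let P ∈ ℝ^{n×n} be symmetric with p̲·I ⪯ P for some p̲ > 0, let M ∈ ℝ^{n×n} be symmetric, let L ∈ ℝ^{n×m}, and let μ > 0. If the symmetric block matrix [[−μ·Iₙ, P, 0], [P, M, L], [0, Lᵀ, −2·I_m]] ⪯ 0, then the block matrix [[M + (p̲/μ)·P, L], [Lᵀ, −2·I_m]] ⪯ 0. -/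
/-!
Substituting `u = μ⁻¹ P y` into the quadratic form of the negated 3×3 block matrix (a congruence
by `(y, z) ↦ ((μ⁻¹ P y, y), z)`) eliminates the first block row and gives
`-[[M + μ⁻¹ P², L], [Lᵀ, -2 I]] ⪰ 0`. Since `P ⪰ p̲ I`, we have
`P² - p̲ P = (P - p̲ I)² + p̲ (P - p̲ I) ⪰ 0`, so lowering `μ⁻¹ P²` to `(p̲ / μ) P` in the top-left
block keeps the negated matrix positive semidefinite.
-/

open Matrix

namespace Matrix

open scoped ComplexOrder

variable {k n m : Type*} [Fintype k] [Fintype n] [Fintype m]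

lemma PosSemidef.mul_self_sub_smul {𝕜 : Type*} [RCLike 𝕜] [DecidableEq n] {A : Matrix n n 𝕜}
    {c : ℝ} (hc : 0 ≤ c) (h : (A - c • 1).PosSemidef) : (A * A - c • A).PosSemidef := by
  have key : A * A - c • A = (A - c • 1)ᴴ * (A - c • 1) + c • (A - c • 1) := by
    rw [h.isHermitian.eq]
    simp only [sub_mul, mul_sub, smul_sub, smul_smul, Matrix.smul_mul, Matrix.mul_smul,
      Matrix.one_mul, Matrix.mul_one]
    abel
  rw [key]
  exact (posSemidef_conjTranspose_mul_self _).add (h.smul hc)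

variable {R : Type*} [Ring R] [StarRing R]

lemma PosSemidef.fromBlocks_zero₂₂ [PartialOrder R] [DecidableEq n] {A : Matrix n n R}
    (hA : A.PosSemidef) : (fromBlocks A 0 0 (0 : Matrix m m R)).PosSemidef := by
  have := hA.conjTranspose_mul_mul_same (fromCols (1 : Matrix n n R) (0 : Matrix n m R))
  rw [conjTranspose_fromCols_eq_fromRows_conjTranspose, fromRows_mul, fromRows_mul_fromCols]
    at this
  simpa only [conjTranspose_one, conjTranspose_zero, Matrix.one_mul, Matrix.mul_one,
    Matrix.mul_zero, Matrix.zero_mul] using this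

lemma conjTranspose_mul_fromBlocks_fromBlocks_mul [DecidableEq n] [DecidableEq m]
    (A : Matrix k k R) (B X : Matrix k n R) (D : Matrix n n R) (C : Matrix n m R)
    (E : Matrix m m R) :
    (fromBlocks (fromRows X 1) (0 : Matrix (k ⊕ n) m R) 0 (1 : Matrix m m R))ᴴ *
        fromBlocks (fromBlocks A B Bᴴ D) (fromRows 0 C) (fromCols 0 Cᴴ) E *
        fromBlocks (fromRows X 1) (0 : Matrix (k ⊕ n) m R) 0 (1 : Matrix m m R) =
      fromBlocks (Xᴴ * A * X + Xᴴ * B + Bᴴ * X + D) C Cᴴ E := by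
  rw [fromBlocks_conjTranspose, conjTranspose_fromRows_eq_fromCols_conjTranspose,
    fromBlocks_multiply, fromBlocks_multiply]
  simp [fromCols_mul_fromBlocks, fromCols_mul_fromRows, Matrix.add_mul, Matrix.mul_assoc]
  abel

lemma PosSemidef.compress_fromBlocks₁₁ [PartialOrder R] [DecidableEq n] [DecidableEq m]
    {A : Matrix k k R} {B : Matrix k n R} {D : Matrix n n R} {C : Matrix n m R}
    {E : Matrix m m R}
    (h : (fromBlocks (fromBlocks A B Bᴴ D) (fromRows 0 C) (fromCols 0 Cᴴ) E).PosSemidef)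
    (X : Matrix k n R) : (fromBlocks (Xᴴ * A * X + Xᴴ * B + Bᴴ * X + D) C Cᴴ E).PosSemidef := by
  simpa only [conjTranspose_mul_fromBlocks_fromBlocks_mul] using
    h.conjTranspose_mul_mul_same
      (fromBlocks (fromRows X 1) (0 : Matrix (k ⊕ n) m R) 0 (1 : Matrix m m R))

end Matrix

theorem block_LMI_reduction_general
    (n m : ℕ) (P M : Matrix (Fin n) (Fin n) ℝ)
    (hPsymm : P.IsSymm)
    (L : Matrix (Fin n) (Fin m) ℝ) (p₁ μ : ℝ) (hp₁ : 0 < p₁) (hμ : 0 < μ)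
    (hPlo : (P - p₁ • (1 : Matrix (Fin n) (Fin n) ℝ)).PosSemidef)
    (hLMI : (-(Matrix.fromBlocks
        (Matrix.fromBlocks (-μ • (1 : Matrix (Fin n) (Fin n) ℝ)) P P M)
        (Matrix.fromRows (0 : Matrix (Fin n) (Fin m) ℝ) L)
        (Matrix.fromCols (0 : Matrix (Fin m) (Fin n) ℝ) Lᵀ)
        (-(2 : ℝ) • (1 : Matrix (Fin m) (Fin m) ℝ)))).PosSemidef) :
    (-(Matrix.fromBlocks (M + (p₁ / μ) • P) L Lᵀ
        (-(2 : ℝ) • (1 : Matrix (Fin m) (Fin m) ℝ)))).PosSemidef := by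
  have hP : Pᴴ = P := by rw [conjTranspose_eq_transpose_of_trivial, hPsymm]
  have hLMI' : (fromBlocks (fromBlocks (μ • 1) (-P) (-P)ᴴ (-M)) (fromRows 0 (-L))
      (fromCols 0 (-L)ᴴ) ((2 : ℝ) • 1 : Matrix (Fin m) (Fin m) ℝ)).PosSemidef := by
    convert hLMI using 1
    simp [hPsymm.eq, fromBlocks_neg, fromRows_neg, fromCols_neg]
  have hschur : (-fromBlocks (M + μ⁻¹ • (P * P)) L Lᵀ (-(2 : ℝ) • 1)).PosSemidef := by
    convert hLMI'.compress_fromBlocks₁₁ (μ⁻¹ • P) using 1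
    rw [fromBlocks_neg]
    congr 1
    · simp only [conjTranspose_smul, conjTranspose_neg, hP, star_trivial, Matrix.smul_mul,
        Matrix.mul_smul, Matrix.mul_one, Matrix.mul_neg, Matrix.neg_mul, smul_smul]
      match_scalars
      · rfl
      · field_simp
        ring
    all_goals simp
  have hgap := ((hPlo.mul_self_sub_smul hp₁.le).smul (inv_nonneg.2 hμ.le)).fromBlocks_zero₂₂
    (m := Fin m)
  convert hschur.add hgap using 1
  rw [fromBlocks_neg, fromBlocks_neg, fromBlocks_add]
  congr 1
  · module
  all_goals simp

/-- Schur-complement-style reduction of the 3×3 block LMI to the 2×2 block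
matrix inequality. -/
theorem block_LMI_reduction
    (n m : ℕ) (P M : Matrix (Fin n) (Fin n) ℝ)
    (hPsymm : P.IsSymm) (hMsymm : M.IsSymm)
    (L : Matrix (Fin n) (Fin m) ℝ) (p₁ μ : ℝ) (hp₁ : 0 < p₁) (hμ : 0 < μ)
    (hPlo : (P - p₁ • (1 : Matrix (Fin n) (Fin n) ℝ)).PosSemidef)
    (hLMI : (-(Matrix.fromBlocks
        (Matrix.fromBlocks (-μ • (1 : Matrix (Fin n) (Fin n) ℝ)) P P M)
        (Matrix.fromRows (0 : Matrix (Fin n) (Fin m) ℝ) L)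
        (Matrix.fromCols (0 : Matrix (Fin m) (Fin n) ℝ) Lᵀ)
        (-(2 : ℝ) • (1 : Matrix (Fin m) (Fin m) ℝ)))).PosSemidef) :
    (-(Matrix.fromBlocks (M + (p₁ / μ) • P) L Lᵀ
        (-(2 : ℝ) • (1 : Matrix (Fin m) (Fin m) ℝ)))).PosSemidef :=
  block_LMI_reduction_general n m P M hPsymm L p₁ μ hp₁ hμ hPlo hLMI
end

section
/- Let γ > 0 and c ≥ 0, and let V : [0,∞) → ℝ be differentiable with V(t) ≥ 0 and V′(t) ≤ −γ·V(t) + c·√(V(t)) for all t ≥ 0. Then for all t ≥ 0, √(V(t)) ≤ e^{−(γ/2)·t}·√(V(0)) + (c/γ)·(1 − e^{−(γ/2)·t}). -/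
/-!
Formally `√V` satisfies `(√V)′ ≤ -(γ/2) √V + c/2`, and the right-hand side of the claim is the
solution `g` of the linear equation `g′ = -(γ/2) g + c/2` with `g 0 = √V(0)`. Since `√V` need not be
differentiable where `V` vanishes, one compares `V` itself with the barrier `(g + ε)²` instead:
where `V` touches it, `V′ ≤ -γ (g + ε)² + c (g + ε) = ((g + ε)²)′ - γ ε (g + ε) < ((g + ε)²)′`,
so `V` never crosses it. Letting `ε → 0` gives the bound.
-/

open Real Set

noncomputable def comparisonBound (γ c a s : ℝ) : ℝ :=
  exp (-(γ / 2) * s) * a + c / γ * (1 - exp (-(γ / 2) * s))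

section ComparisonBound

variable {γ c a : ℝ}

@[simp]
theorem comparisonBound_zero : comparisonBound γ c a 0 = a := by
  simp [comparisonBound]

theorem hasDerivAt_comparisonBound (hγ : γ ≠ 0) (s : ℝ) :
    HasDerivAt (comparisonBound γ c a) (-(γ / 2) * comparisonBound γ c a s + c / 2) s := by
  have hexp : HasDerivAt (fun u => exp (-(γ / 2) * u)) (exp (-(γ / 2) * s) * (-(γ / 2))) s := by
    simpa using ((hasDerivAt_id s).const_mul (-(γ / 2))).exp
  refine ((hexp.mul_const a).add ((hexp.const_sub 1).const_mul (c / γ))).congr_deriv ?_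
  simp only [comparisonBound]
  field_simp
  ring

theorem comparisonBound_nonneg (hγ : 0 < γ) (hc : 0 ≤ c) (ha : 0 ≤ a) {s : ℝ} (hs : 0 ≤ s) :
    0 ≤ comparisonBound γ c a s := by
  have hexp_le_one : exp (-(γ / 2) * s) ≤ 1 := exp_le_one_iff.mpr (by nlinarith)
  unfold comparisonBound
  have hcγ := div_nonneg hc hγ.le
  have hweight := sub_nonneg.mpr hexp_le_one
  positivity

end ComparisonBound

theorem sqrt_le_comparisonBound_add {γ c ε t : ℝ} {V V' : ℝ → ℝ} (hγ : 0 < γ) (hc : 0 ≤ c)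
    (hε : 0 < ε) (ht : 0 ≤ t) (hVc : ContinuousOn V (Icc 0 t))
    (hV : ∀ s ∈ Ico 0 t, HasDerivWithinAt V (V' s) (Ici s) s)
    (hV' : ∀ s ∈ Ico 0 t, V' s ≤ -γ * V s + c * √(V s)) :
    √(V t) ≤ comparisonBound γ c √(V 0) t + ε := by
  set g := comparisonBound γ c √(V 0)
  have hg_pos : ∀ s, 0 ≤ s → 0 < g s + ε := fun s hs =>
    add_pos_of_nonneg_of_pos (comparisonBound_nonneg hγ hc (sqrt_nonneg _) hs) hε
  have hbarrier : ∀ s, HasDerivAt (fun u => (g u + ε) ^ 2)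
      (2 * (g s + ε) * (-(γ / 2) * g s + c / 2)) s := fun s =>
    ((hasDerivAt_comparisonBound hγ.ne' s).add_const ε).pow 2 |>.congr_deriv (by ring)
  have hstart : V 0 ≤ (g 0 + ε) ^ 2 := by
    have : V 0 ≤ √(V 0) ^ 2 := sq_sqrt' (x := V 0) ▸ le_max_left _ _
    simp only [g, comparisonBound_zero]
    nlinarith [sqrt_nonneg (V 0)]
  have hcross : ∀ s ∈ Ico 0 t, V s = (g s + ε) ^ 2 →
      V' s < 2 * (g s + ε) * (-(γ / 2) * g s + c / 2) := by
    intro s hs hVs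
    have hpos := hg_pos s hs.1
    have hV's := hV' s hs
    rw [hVs, sqrt_sq hpos.le] at hV's
    nlinarith [mul_pos hγ (mul_pos hε hpos)]
  have hVt := image_le_of_deriv_right_lt_deriv_boundary hVc hV hstart hbarrier hcross
    (right_mem_Icc.mpr ht)
  calc √(V t) ≤ √((g t + ε) ^ 2) := sqrt_le_sqrt hVt
    _ = g t + ε := sqrt_sq (hg_pos t ht).le

theorem sqrt_comparison_lemma_general
    (γ c : ℝ) (hγ : 0 < γ) (hc : 0 ≤ c)
    (V V' : ℝ → ℝ)
    (hV : ∀ t, 0 ≤ t → HasDerivAt V (V' t) t)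
    (hV' : ∀ t, 0 ≤ t → V' t ≤ -γ * V t + c * Real.sqrt (V t)) :
    ∀ t, 0 ≤ t →
      Real.sqrt (V t) ≤
        Real.exp (-(γ / 2) * t) * Real.sqrt (V 0)
          + (c / γ) * (1 - Real.exp (-(γ / 2) * t)) := by
  intro t ht
  exact le_of_forall_pos_le_add fun ε hε => sqrt_le_comparisonBound_add hγ hc hε ht
    (fun s hs => (hV s hs.1).continuousAt.continuousWithinAt)
    (fun s hs => (hV s hs.1).hasDerivWithinAt) (fun s hs => hV' s hs.1)

/-- comparison lemma: if `V ≥ 0` is differentiable on `[0, ∞)` with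
`V′ ≤ −γ V + c √V` there, then `√V(t) ≤ e^{−γt/2} √V(0) + (c/γ)(1 − e^{−γt/2})`. -/
theorem sqrt_comparison_lemma
    (γ c : ℝ) (hγ : 0 < γ) (hc : 0 ≤ c)
    (V V' : ℝ → ℝ)
    (hV : ∀ t, 0 ≤ t → HasDerivAt V (V' t) t)
    (hV0 : ∀ t, 0 ≤ t → 0 ≤ V t)
    (hV' : ∀ t, 0 ≤ t → V' t ≤ -γ * V t + c * Real.sqrt (V t)) :
    ∀ t, 0 ≤ t →
      Real.sqrt (V t) ≤
        Real.exp (-(γ / 2) * t) * Real.sqrt (V 0)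
          + (c / γ) * (1 - Real.exp (-(γ / 2) * t)) :=
  sqrt_comparison_lemma_general γ c hγ hc V V' hV hV'
end

section
/- Let α < β be real numbers, A ∈ ℝ^{n×n}, g ∈ ℝ^{n×l}, Y ∈ ℝ^{l×n}, W¹ ∈ ℝ^{m×n}, W_min ∈ ℝ^{n×m}, b¹ ∈ ℝᵐ, c ∈ ℝⁿ, and let φ : ℝ → ℝ be incrementally sector bounded by [α, β] on ℝ with componentwise application Φ : ℝᵐ → ℝᵐ. Suppose there exist a symmetric positive definite S ∈ ℝ^{n×n} and constants 0 < s̲ ≤ s̄, μ > 0 with s̲·I ⪯ S ⪯ s̄·I such that, with R̄ = AS + SAᵀ + gY + Yᵀgᵀ − (2αβ/(β−α)²)·W_min·W_minᵀ and R̃ = ((α+β)/(β−α))·W_min + (β−α)·S·W¹ᵀ, the symmetric block matrix [[−μ·Iₙ, S, 0], [S, R̄, R̃], [0, R̃ᵀ, −2·I_m]] ⪯ 0. Then, setting H = Y·S⁻¹, any two differentiable functions x₁, x₂ : [0,∞) → ℝⁿ satisfying ẋ(t) = (A + gH)·x(t) + W_min·Φ(W¹·x(t) + b¹) + c for all t ≥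 0 satisfy ‖x₁(t) − x₂(t)‖ ≤ √(s̄/s̲)·e^{−(s̲/(2μ))·t}·‖x₁(0) − x₂(0)‖ for all t ≥ 0. -/
/-!
With `p = S⁻¹ e` for the error `e = x₁ - x₂`, the function `V(e) = eᵀ S⁻¹ e` is a Lyapunov
function for the error dynamics. Testing the LMI on the vector `(μ⁻¹ e, p, w)`, where `w` is the
nonlinearity increment shifted by a multiple of `W_minᵀ p` and `W¹ e`, and adding twice the
(nonpositive) incremental sector form, gives `V' ≤ -μ⁻¹ ‖e‖² ≤ -(s̲/μ) V`. Grönwall then yields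
`V(t) ≤ e^{-(s̲/μ) t} V(0)`, and `s̲ I ⪯ S ⪯ s̄ I` converts this into the bound on `‖e‖`.
-/

open Matrix

section MatrixIdentities

variable {n m : Type*} [Fintype n] [Fintype m]

lemma Matrix.IsSymm.dotProduct_mulVec_comm {S : Matrix n n ℝ} (hS : S.IsSymm) (x y : n → ℝ) :
    x ⬝ᵥ S *ᵥ y = y ⬝ᵥ S *ᵥ x := by
  rw [← dotProduct_transpose_mulVec, hS.eq]

lemma dotProduct_mulVec_eq_transpose_mulVec_dotProduct (M : Matrix n m ℝ) (x : n → ℝ)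
    (y : m → ℝ) : x ⬝ᵥ M *ᵥ y = Mᵀ *ᵥ x ⬝ᵥ y := by
  rw [dotProduct_mulVec, mulVec_transpose]

lemma dotProduct_fromBlocks_mulVec (P : Matrix n n ℝ) (Q : Matrix n m ℝ) (R : Matrix m n ℝ)
    (T : Matrix m m ℝ) (x : n → ℝ) (y : m → ℝ) :
    Sum.elim x y ⬝ᵥ fromBlocks P Q R T *ᵥ Sum.elim x y =
      x ⬝ᵥ P *ᵥ x + x ⬝ᵥ Q *ᵥ y + y ⬝ᵥ R *ᵥ x + y ⬝ᵥ T *ᵥ y := by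
  simp only [fromBlocks_mulVec, Sum.elim_comp_inl, Sum.elim_comp_inr, sumElim_dotProduct_sumElim,
    dotProduct_add]
  ring

lemma Matrix.PosDef.mulVec_inv_mulVec [DecidableEq n] {S : Matrix n n ℝ} (hS : S.PosDef)
    (v : n → ℝ) : S *ᵥ S⁻¹ *ᵥ v = v := by
  rw [mulVec_mulVec, mul_nonsing_inv S ((isUnit_iff_isUnit_det S).1 hS.isUnit), one_mulVec]

end MatrixIdentities

section Calculus

variable {n : Type*} [Fintype n]

lemma HasDerivAt.dotProduct_s14 {u v : ℝ → n → ℝ} {u' v' : n → ℝ} {t : ℝ}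
    (hu : HasDerivAt u u' t) (hv : HasDerivAt v v' t) :
    HasDerivAt (fun s => u s ⬝ᵥ v s) (u' ⬝ᵥ v t + u t ⬝ᵥ v') t := by
  have h := HasDerivAt.fun_sum (u := Finset.univ) fun i _ =>
    (hasDerivAt_pi.1 hu i).fun_mul (hasDerivAt_pi.1 hv i)
  rw [Finset.sum_add_distrib] at h
  exact h

lemma HasDerivAt.mulVec {m : Type*} (M : Matrix m n ℝ) {u : ℝ → n → ℝ} {u' : n → ℝ} {t : ℝ}
    (hu : HasDerivAt u u' t) : HasDerivAt (fun s => M *ᵥ u s) (M *ᵥ u') t :=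
  hasDerivAt_pi.2 fun i =>
    ((hasDerivAt_const t (M i)).dotProduct_s14 hu).congr_deriv (by rw [zero_dotProduct, zero_add]; rfl)

lemma HasDerivAt.dotProduct_mulVec_self_s14 {M : Matrix n n ℝ} (hM : M.IsSymm) {u : ℝ → n → ℝ}
    {u' : n → ℝ} {t : ℝ} (hu : HasDerivAt u u' t) :
    HasDerivAt (fun s => u s ⬝ᵥ M *ᵥ u s) (2 * (M *ᵥ u t ⬝ᵥ u')) t := by
  convert hu.dotProduct_s14 (hu.mulVec M) using 1
  rw [hM.dotProduct_mulVec_comm u', dotProduct_mulVec_eq_transpose_mulVec_dotProduct, hM.eq,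
    two_mul]

lemma le_mul_exp_of_hasDerivAt_le_neg_mul {V V' : ℝ → ℝ} {k t : ℝ}
    (hV : ∀ s, 0 ≤ s → HasDerivAt V (V' s) s) (hV' : ∀ s, 0 ≤ s → V' s ≤ -k * V s)
    (ht : 0 ≤ t) : V t ≤ V 0 * Real.exp (-k * t) := by
  have h := le_gronwallBound_of_liminf_deriv_right_le (f' := V') (ε := 0)
    (fun s hs => (hV s hs.1).continuousAt.continuousWithinAt)
    (fun s hs _ hr => (hV s hs.1).hasDerivWithinAt.liminf_right_slope_le hr) le_rfl
    (fun s hs => by rw [add_zero]; exact hV' s hs.1) t ⟨ht, le_rfl⟩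
  simpa [gronwallBound_ε0] using h

end Calculus

section Lyapunov

variable {n : Type*} [Fintype n] [DecidableEq n] {S : Matrix n n ℝ}

lemma Matrix.PosDef.mul_dotProduct_inv_mulVec_le (hS : S.PosDef) {s : ℝ} (hs : 0 ≤ s)
    (hSs : (S - s • 1).PosSemidef) (v : n → ℝ) : s * (v ⬝ᵥ S⁻¹ *ᵥ v) ≤ v ⬝ᵥ v := by
  set p := S⁻¹ *ᵥ v
  have hSp : S *ᵥ p = v := hS.mulVec_inv_mulVec v
  have hV : v ⬝ᵥ p = p ⬝ᵥ S *ᵥ p := by rw [hSp, dotProduct_comm]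
  have hp : s * (p ⬝ᵥ p) ≤ p ⬝ᵥ S *ᵥ p := by
    simpa [sub_mulVec, smul_mulVec] using hSs.dotProduct_mulVec_nonneg p
  have hsq : 0 ≤ (v - s • p) ⬝ᵥ (v - s • p) := by
    simpa using (PosSemidef.one (n := n) (R := ℝ)).dotProduct_mulVec_nonneg (v - s • p)
  simp only [dotProduct_sub, sub_dotProduct, dotProduct_smul, smul_dotProduct, smul_eq_mul,
    dotProduct_comm p v] at hsq
  nlinarith [mul_le_mul_of_nonneg_left hp hs]

lemma Matrix.PosDef.dotProduct_self_le_mul_dotProduct_inv_mulVec (hS : S.PosDef) {s : ℝ}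
    (hs : 0 < s) (hSs : (s • 1 - S).PosSemidef) (v : n → ℝ) :
    v ⬝ᵥ v ≤ s * (v ⬝ᵥ S⁻¹ *ᵥ v) := by
  set p := S⁻¹ *ᵥ v
  have hSp : S *ᵥ p = v := hS.mulVec_inv_mulVec v
  have hv : v ⬝ᵥ S *ᵥ v ≤ s * (v ⬝ᵥ v) := by
    simpa [sub_mulVec, smul_mulVec] using hSs.dotProduct_mulVec_nonneg v
  have hsq := hS.posSemidef.dotProduct_mulVec_nonneg (s • p - v)
  simp only [star_trivial, mulVec_sub, mulVec_smul, hSp, dotProduct_sub, sub_dotProduct,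
    dotProduct_smul, smul_dotProduct, smul_eq_mul] at hsq
  have hpSv : p ⬝ᵥ S *ᵥ v = v ⬝ᵥ v := by
    have hS' : S.IsSymm := hS.isHermitian
    rw [hS'.dotProduct_mulVec_comm, hSp]
  rw [hpSv, dotProduct_comm p v] at hsq
  nlinarith

lemma dotProduct_self_le_of_quadratic_lyapunov (hS : S.PosDef) {s₁ s₂ μ : ℝ} (hs₁ : 0 < s₁)
    (hs₁₂ : s₁ ≤ s₂) (hμ : 0 < μ) (hSlo : (S - s₁ • 1).PosSemidef)
    (hShi : (s₂ • 1 - S).PosSemidef) {e e' : ℝ → n → ℝ}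
    (he : ∀ t, 0 ≤ t → HasDerivAt e (e' t) t)
    (hdecr : ∀ t, 0 ≤ t → 2 * (S⁻¹ *ᵥ e t ⬝ᵥ e' t) + μ⁻¹ * (e t ⬝ᵥ e t) ≤ 0)
    {t : ℝ} (ht : 0 ≤ t) :
    e t ⬝ᵥ e t ≤ s₂ / s₁ * Real.exp (-(s₁ / μ) * t) * (e 0 ⬝ᵥ e 0) := by
  have hs₂ : 0 < s₂ := hs₁.trans_le hs₁₂
  have hSinv : S⁻¹.IsSymm := hS.inv.isHermitian
  have hV : e t ⬝ᵥ S⁻¹ *ᵥ e t ≤ e 0 ⬝ᵥ S⁻¹ *ᵥ e 0 * Real.exp (-(s₁ / μ) * t) := by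
    refine le_mul_exp_of_hasDerivAt_le_neg_mul
      (fun s hs => (he s hs).dotProduct_mulVec_self_s14 hSinv) (fun s hs => ?_) ht
    have h := mul_le_mul_of_nonneg_left (hS.mul_dotProduct_inv_mulVec_le hs₁.le hSlo (e s))
      (inv_pos.2 hμ).le
    rw [div_eq_mul_inv]
    linarith [hdecr s hs]
  have h0 : e 0 ⬝ᵥ S⁻¹ *ᵥ e 0 ≤ (e 0 ⬝ᵥ e 0) / s₁ := by
    rw [le_div_iff₀ hs₁, mul_comm]
    exact hS.mul_dotProduct_inv_mulVec_le hs₁.le hSlo (e 0)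
  calc e t ⬝ᵥ e t ≤ s₂ * (e t ⬝ᵥ S⁻¹ *ᵥ e t) :=
        hS.dotProduct_self_le_mul_dotProduct_inv_mulVec hs₂ hShi (e t)
    _ ≤ s₂ * ((e 0 ⬝ᵥ e 0) / s₁ * Real.exp (-(s₁ / μ) * t)) := by
        gcongr
        exact hV.trans (by gcongr)
    _ = s₂ / s₁ * Real.exp (-(s₁ / μ) * t) * (e 0 ⬝ᵥ e 0) := by ring

end Lyapunov

section Hopfield

variable {n l m : Type*} [Fintype n] [Fintype l] [Fintype m]

def IsIncrementallySectorBounded (φ : ℝ → ℝ) (α β : ℝ) : Prop :=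
  ∀ a b, (φ a - φ b - α * (a - b)) * (φ a - φ b - β * (a - b)) ≤ 0

lemma IsIncrementallySectorBounded.dotProduct_nonpos {φ : ℝ → ℝ} {α β : ℝ}
    (hφ : IsIncrementallySectorBounded φ α β) (a b : m → ℝ) :
    (φ ∘ a - φ ∘ b - α • (a - b)) ⬝ᵥ (φ ∘ a - φ ∘ b - β • (a - b)) ≤ 0 :=
  Finset.sum_nonpos fun j _ => hφ (a j) (b j)

def hopfieldField (K : Matrix n n ℝ) (W1 : Matrix m n ℝ) (Wmin : Matrix n m ℝ) (b1 : m → ℝ)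
    (c : n → ℝ) (φ : ℝ → ℝ) (x : n → ℝ) : n → ℝ :=
  K *ᵥ x + Wmin *ᵥ (φ ∘ (W1 *ᵥ x + b1)) + c

lemma hopfieldField_sub (K : Matrix n n ℝ) (W1 : Matrix m n ℝ) (Wmin : Matrix n m ℝ)
    (b1 : m → ℝ) (c : n → ℝ) (φ : ℝ → ℝ) (x y : n → ℝ) :
    hopfieldField K W1 Wmin b1 c φ x - hopfieldField K W1 Wmin b1 c φ y =
      K *ᵥ (x - y) + Wmin *ᵥ (φ ∘ (W1 *ᵥ x + b1) - φ ∘ (W1 *ᵥ y + b1)) := by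
  rw [hopfieldField, hopfieldField, mulVec_sub, mulVec_sub]
  abel

variable [DecidableEq n] [DecidableEq m]

noncomputable def hopfieldLMI (α β μ : ℝ) (A : Matrix n n ℝ) (g : Matrix n l ℝ)
    (Y : Matrix l n ℝ) (W1 : Matrix m n ℝ) (Wmin : Matrix n m ℝ) (S : Matrix n n ℝ) :
    Matrix ((n ⊕ n) ⊕ m) ((n ⊕ n) ⊕ m) ℝ :=
  Matrix.fromBlocks
    (Matrix.fromBlocks (-μ • (1 : Matrix n n ℝ)) S
      S (A * S + S * Aᵀ + g * Y + Yᵀ * gᵀ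
          - (2 * α * β / (β - α) ^ 2) • (Wmin * Wminᵀ)))
    (Matrix.fromRows (0 : Matrix n m ℝ)
      (((α + β) / (β - α)) • Wmin + (β - α) • (S * W1ᵀ)))
    (Matrix.fromCols (0 : Matrix m n ℝ)
      ((((α + β) / (β - α)) • Wmin + (β - α) • (S * W1ᵀ))ᵀ))
    (-(2 : ℝ) • (1 : Matrix m m ℝ))

variable {α β μ : ℝ} {A : Matrix n n ℝ} {g : Matrix n l ℝ} {Y : Matrix l n ℝ}
  {W1 : Matrix m n ℝ} {Wmin : Matrix n m ℝ} {S : Matrix n n ℝ}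

lemma hopfieldLMI_quadForm (hS : S.IsSymm) (z p : n → ℝ) (w : m → ℝ) :
    Sum.elim (Sum.elim z p) w ⬝ᵥ hopfieldLMI α β μ A g Y W1 Wmin S *ᵥ Sum.elim (Sum.elim z p) w =
      -μ * (z ⬝ᵥ z) + 2 * (z ⬝ᵥ S *ᵥ p) + 2 * (p ⬝ᵥ A *ᵥ S *ᵥ p) + 2 * (p ⬝ᵥ g *ᵥ Y *ᵥ p)
        - 2 * α * β / (β - α) ^ 2 * (Wminᵀ *ᵥ p ⬝ᵥ Wminᵀ *ᵥ p)
        + 2 * ((α + β) / (β - α)) * (Wminᵀ *ᵥ p ⬝ᵥ w)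
        + 2 * (β - α) * (W1 *ᵥ S *ᵥ p ⬝ᵥ w) - 2 * (w ⬝ᵥ w) := by
  rw [hopfieldLMI, dotProduct_fromBlocks_mulVec, dotProduct_fromBlocks_mulVec]
  simp only [fromRows_mulVec, fromCols_mulVec_sumElim, zero_mulVec, zero_add,
    sumElim_dotProduct_sumElim, dotProduct_zero, add_mulVec, sub_mulVec, smul_mulVec, one_mulVec,
    ← mulVec_mulVec, dotProduct_add, dotProduct_sub, dotProduct_smul, smul_eq_mul, transpose_add,
    transpose_smul, transpose_mul, transpose_transpose, dotProduct_transpose_mulVec, hS.eq]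
  have hSA : p ⬝ᵥ S *ᵥ Aᵀ *ᵥ p = p ⬝ᵥ A *ᵥ S *ᵥ p := by
    rw [hS.dotProduct_mulVec_comm, dotProduct_comm, dotProduct_transpose_mulVec]
  have hYg : gᵀ *ᵥ p ⬝ᵥ Y *ᵥ p = p ⬝ᵥ g *ᵥ Y *ᵥ p := by
    rw [dotProduct_comm, dotProduct_transpose_mulVec]
  have hSW : p ⬝ᵥ S *ᵥ W1ᵀ *ᵥ w = W1 *ᵥ S *ᵥ p ⬝ᵥ w := by
    rw [hS.dotProduct_mulVec_comm, dotProduct_comm, dotProduct_transpose_mulVec, dotProduct_comm]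
  rw [hS.dotProduct_mulVec_comm p z, hSA, hYg, hSW, dotProduct_comm w,
    dotProduct_mulVec_eq_transpose_mulVec_dotProduct Wmin p,
    dotProduct_mulVec_eq_transpose_mulVec_dotProduct Wmin p]
  ring

lemma hopfieldLMI_decrease (hαβ : α < β) (hμ : 0 < μ) (hS : S.IsSymm)
    (hLMI : (-hopfieldLMI α β μ A g Y W1 Wmin S).PosSemidef) (p : n → ℝ) (D : m → ℝ)
    (hD : (D - α • W1 *ᵥ S *ᵥ p) ⬝ᵥ (D - β • W1 *ᵥ S *ᵥ p) ≤ 0) :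
    2 * (p ⬝ᵥ (A *ᵥ S *ᵥ p + g *ᵥ Y *ᵥ p + Wmin *ᵥ D)) + μ⁻¹ * (S *ᵥ p ⬝ᵥ S *ᵥ p) ≤ 0 := by
  set u := Wminᵀ *ᵥ p with hu
  set q := W1 *ᵥ S *ᵥ p with hq
  -- the unique shift of `D` for which the LMI form plus twice the sector form involves `D`
  -- only through `2 u ⬝ᵥ D`
  set w := D + (α / (β - α)) • u - α • q with hw
  have hξ := hLMI.dotProduct_mulVec_nonneg (Sum.elim (Sum.elim (μ⁻¹ • S *ᵥ p) p) w)
  rw [star_trivial, neg_mulVec, dotProduct_neg, hopfieldLMI_quadForm hS, ← hu, ← hq,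
    neg_nonneg] at hξ
  rw [dotProduct_add, dotProduct_add, dotProduct_mulVec_eq_transpose_mulVec_dotProduct Wmin p,
    ← hu]
  simp only [hw, dotProduct_add, add_dotProduct, dotProduct_sub, sub_dotProduct, dotProduct_smul,
    smul_dotProduct, smul_eq_mul] at hξ hD
  rw [dotProduct_comm D u, dotProduct_comm D q, dotProduct_comm q u] at hξ
  rw [dotProduct_comm D q] at hD
  have hβα : β - α ≠ 0 := sub_ne_zero.2 hαβ.ne'
  have hμ0 : μ ≠ 0 := hμ.ne'
  linear_combination (norm := skip) hξ + 2 * hD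
  refine le_of_eq ?_
  field_simp
  ring

lemma hopfieldField_decrease {b1 : m → ℝ} {c : n → ℝ} {φ : ℝ → ℝ} (hαβ : α < β) (hμ : 0 < μ)
    (hS : S.PosDef) (hLMI : (-hopfieldLMI α β μ A g Y W1 Wmin S).PosSemidef)
    (hφ : IsIncrementallySectorBounded φ α β) (x y : n → ℝ) :
    2 * (S⁻¹ *ᵥ (x - y) ⬝ᵥ (hopfieldField (A + g * (Y * S⁻¹)) W1 Wmin b1 c φ x -
      hopfieldField (A + g * (Y * S⁻¹)) W1 Wmin b1 c φ y)) + μ⁻¹ * ((x - y) ⬝ᵥ (x - y)) ≤ 0 := by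
  set p := S⁻¹ *ᵥ (x - y)
  have hSp : S *ᵥ p = x - y := hS.mulVec_inv_mulVec (x - y)
  have hK : (A + g * (Y * S⁻¹)) *ᵥ (x - y) = A *ᵥ S *ᵥ p + g *ᵥ Y *ᵥ p := by
    rw [hSp, add_mulVec, ← mulVec_mulVec, ← mulVec_mulVec]
  have hD := hφ.dotProduct_nonpos (W1 *ᵥ x + b1) (W1 *ᵥ y + b1)
  rw [add_sub_add_right_eq_sub, ← mulVec_sub, ← hSp] at hD
  rw [hopfieldField_sub, hK, ← hSp]
  exact hopfieldLMI_decrease hαβ hμ hS.isHermitian hLMI p _ hD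

end Hopfield

/-- Theorem 5: with `H = Y S⁻¹`, the convex LMI condition on `S, Y, μ`
guarantees contraction of the controlled Hopfield system
`ẋ = (A + gH) x + W_min Φ(W¹ x + b¹) + c`. -/
theorem controlled_hopfield_contractive_LMI
    (n l m : ℕ) (α β : ℝ) (hαβ : α < β)
    (A : Matrix (Fin n) (Fin n) ℝ)
    (g : Matrix (Fin n) (Fin l) ℝ) (Y : Matrix (Fin l) (Fin n) ℝ)
    (W1 : Matrix (Fin m) (Fin n) ℝ) (Wmin : Matrix (Fin n) (Fin m) ℝ)
    (b1 : Fin m → ℝ) (c : Fin n → ℝ)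
    (φ : ℝ → ℝ)
    (hsec : ∀ a d : ℝ, (φ a - φ d - α * (a - d)) * (φ a - φ d - β * (a - d)) ≤ 0)
    (S : Matrix (Fin n) (Fin n) ℝ) (hS : S.PosDef)
    (s₁ s₂ μ : ℝ) (hs₁ : 0 < s₁) (hs₁₂ : s₁ ≤ s₂) (hμ : 0 < μ)
    (hSlo : (S - s₁ • (1 : Matrix (Fin n) (Fin n) ℝ)).PosSemidef)
    (hShi : (s₂ • (1 : Matrix (Fin n) (Fin n) ℝ) - S).PosSemidef)
    (hLMI : (-(Matrix.fromBlocks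
        (Matrix.fromBlocks (-μ • (1 : Matrix (Fin n) (Fin n) ℝ)) S
          S (A * S + S * Aᵀ + g * Y + Yᵀ * gᵀ
              - (2 * α * β / (β - α) ^ 2) • (Wmin * Wminᵀ)))
        (Matrix.fromRows (0 : Matrix (Fin n) (Fin m) ℝ)
          (((α + β) / (β - α)) • Wmin + (β - α) • (S * W1ᵀ)))
        (Matrix.fromCols (0 : Matrix (Fin m) (Fin n) ℝ)
          ((((α + β) / (β - α)) • Wmin + (β - α) • (S * W1ᵀ))ᵀ))
        (-(2 : ℝ) • (1 : Matrix (Fin m) (Fin m) ℝ)))).PosSemidef)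
    (x₁ x₂ : ℝ → Fin n → ℝ)
    (hx₁ : ∀ t, 0 ≤ t → HasDerivAt x₁
      ((A + g * (Y * S⁻¹)).mulVec (x₁ t)
        + Wmin.mulVec (fun j => φ (W1.mulVec (x₁ t) j + b1 j)) + c) t)
    (hx₂ : ∀ t, 0 ≤ t → HasDerivAt x₂
      ((A + g * (Y * S⁻¹)).mulVec (x₂ t)
        + Wmin.mulVec (fun j => φ (W1.mulVec (x₂ t) j + b1 j)) + c) t) :
    ∀ t, 0 ≤ t →
      eNorm (x₁ t - x₂ t) ≤
        Real.sqrt (s₂ / s₁) * Real.exp (-(s₁ / (2 * μ)) * t) * eNorm (x₁ 0 - x₂ 0) := by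
  intro t ht
  have hsq := dotProduct_self_le_of_quadratic_lyapunov hS hs₁ hs₁₂ hμ hSlo hShi
    (e := fun s => x₁ s - x₂ s) (fun s hs => (hx₁ s hs).sub (hx₂ s hs))
    (fun s _ => hopfieldField_decrease hαβ hμ hS hLMI hsec (x₁ s) (x₂ s)) ht
  have hexp : Real.exp (-(s₁ / μ) * t) = Real.exp (-(s₁ / (2 * μ)) * t) ^ 2 := by
    rw [sq, ← Real.exp_add]
    ring_nf
  have hs : 0 ≤ s₂ / s₁ := div_nonneg (hs₁.le.trans hs₁₂) hs₁.le
  rw [hexp] at hsq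
  calc eNorm (x₁ t - x₂ t)
      ≤ Real.sqrt (s₂ / s₁ * Real.exp (-(s₁ / (2 * μ)) * t) ^ 2 *
          ((x₁ 0 - x₂ 0) ⬝ᵥ (x₁ 0 - x₂ 0))) := Real.sqrt_le_sqrt hsq
    _ = _ := by
      rw [Real.sqrt_mul (mul_nonneg hs (sq_nonneg _)), Real.sqrt_mul' _ (sq_nonneg _),
        Real.sqrt_sq (Real.exp_pos _).le, eNorm]
end

section
/- Let α < β be real numbers, A ∈ ℝ^{n×n}, g ∈ ℝ^{n×l}, Y ∈ ℝ^{l×n}, W¹ ∈ ℝ^{m×n}, W_min ∈ ℝ^{n×m}, let S ∈ ℝ^{n×n} be symmetric positive definite with s̲·I ⪯ S for some s̲ > 0, and let μ > 0. Define R̄ = AS + SAᵀ + gY + Yᵀgᵀ − (2αβ/(β−α)²)·W_min·W_minᵀ and R̃ = ((α+β)/(β−α))·W_min + (β−α)·S·W¹ᵀ. If the symmetric block matrix [[−μ·Iₙ, S, 0], [S, R̄, R̃], [0, R̃ᵀ, −2·I_m]] ⪯ 0, then with P = S⁻¹, H = Y·S⁻¹ and γ = s̲/μ, the block matrix [[(A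 + gH)ᵀP + P(A + gH) + γP − 2αβ·W¹ᵀW¹, P·W_min + (α+β)·W¹ᵀ], [(P·W_min + (α+β)·W¹ᵀ)ᵀ, −2·I_m]] ⪯ 0. -/
/-!
Eliminating the first block row and column of the LMI by the congruence with
`[[μ⁻¹ S, 0], [1, 0], [0, 1]]` (one direction of a Schur complement) gives
`[[μ⁻¹ S² + R̄, R̃], [R̃ᵀ, -2]] ⪯ 0`. Since `S` commutes with `S - s̲ • 1 ⪰ 0`, we have
`μ⁻¹ S² ⪰ (s̲ / μ) S`, so the top-left block may be lowered to `(s̲ / μ) S + R̄`.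
Finally the congruence with `[[P, 0], [c W_minᵀ P - α W¹, 1]]`, `c = α / (β - α)`, produces the
target: `P R̄ P` yields the Lyapunov terms of `A + g H`, and this choice of `c` cancels the
`W_min W_minᵀ` and mixed terms, leaving `-2αβ W¹ᵀ W¹`.
-/

open Matrix
open scoped MatrixOrder ComplexOrder

namespace Matrix

variable {n m : Type*}

theorem nonpos_iff_posSemidef_neg {𝕜 : Type*} [RCLike 𝕜] {M : Matrix n n 𝕜} :
    M ≤ 0 ↔ (-M).PosSemidef := by
  rw [le_iff, zero_sub]

variable [Fintype n] [Fintype m]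

theorem transpose_mul_mul_nonpos {M : Matrix n n ℝ} (hM : M ≤ 0) (T : Matrix n m ℝ) :
    Tᵀ * M * T ≤ 0 := by
  have h := (nonpos_iff_posSemidef_neg.1 hM).conjTranspose_mul_mul_same T
  rwa [Matrix.mul_neg, Matrix.neg_mul, conjTranspose_eq_transpose_of_trivial,
    ← nonpos_iff_posSemidef_neg] at h

theorem fromBlocks_le_fromBlocks_left {𝕜 : Type*} [RCLike 𝕜] [DecidableEq n]
    {X X' : Matrix n n 𝕜} (h : X ≤ X') (B : Matrix n m 𝕜) (C : Matrix m n 𝕜) (D : Matrix m m 𝕜) :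
    fromBlocks X B C D ≤ fromBlocks X' B C D := by
  have hpad :=
    (le_iff.1 h).conjTranspose_mul_mul_same (fromCols (1 : Matrix n n 𝕜) (0 : Matrix n m 𝕜))
  rw [le_iff]
  convert hpad using 1
  simp only [sub_eq_add_neg, fromBlocks_neg, fromBlocks_add, add_neg_cancel,
    conjTranspose_fromCols_eq_fromRows_conjTranspose, conjTranspose_one, conjTranspose_zero,
    fromRows_mul, Matrix.one_mul, Matrix.zero_mul, mul_fromCols, Matrix.mul_one, Matrix.mul_zero]
  ext (i | i) (j | j) <;> rfl

open scoped Matrix.Norms.L2Operator in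
theorem smul_le_inv_smul_mul_self {𝕜 : Type*} [RCLike 𝕜] [DecidableEq n] {S : Matrix n n 𝕜}
    {s μ : ℝ} (hS : S.PosSemidef) (hsS : s • 1 ≤ S) (hμ : 0 ≤ μ) :
    (s / μ) • S ≤ μ⁻¹ • (S * S) := by
  have hcomm : Commute S (S - s • 1) :=
    (Commute.refl S).sub_right ((Commute.one_right S).smul_right s)
  have hprod : 0 ≤ S * (S - s • 1) := hcomm.mul_nonneg hS.nonneg (sub_nonneg.2 hsS)
  rw [le_iff]
  convert hprod.posSemidef.smul (inv_nonneg.2 hμ) using 1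
  rw [Matrix.mul_sub, Matrix.mul_smul, Matrix.mul_one, smul_sub, smul_smul, inv_mul_eq_div]

theorem fromBlocks_add_inv_smul_mul_self_nonpos [DecidableEq n] [DecidableEq m] {μ : ℝ}
    (hμ : μ ≠ 0) {S R : Matrix n n ℝ} (hS : Sᵀ = S) {Q : Matrix n m ℝ} {D : Matrix m m ℝ}
    (h : fromBlocks (fromBlocks (-μ • 1) S S R) (fromRows 0 Q) (fromCols 0 Qᵀ) D ≤ 0) :
    fromBlocks (μ⁻¹ • (S * S) + R) Q Qᵀ D ≤ 0 := by
  convert transpose_mul_mul_nonpos h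
    (fromBlocks (fromRows (μ⁻¹ • S) (1 : Matrix n n ℝ)) (0 : Matrix (n ⊕ n) m ℝ) 0 1) using 1
  rw [fromBlocks_transpose, transpose_fromRows, fromBlocks_multiply, fromBlocks_multiply]
  simp [fromCols_mul_fromRows, fromCols_mul_fromBlocks, hS, smul_smul, hμ]

theorem transpose_fromBlocks_mul_fromBlocks_mul_fromBlocks [DecidableEq m] {R : Type*}
    [CommRing R] (X : Matrix n n R) (Q : Matrix n m R) {D : Matrix m m R} (hD : Dᵀ = D)
    (P : Matrix n n R) (K : Matrix m n R) :
    (fromBlocks P 0 K 1)ᵀ * fromBlocks X Q Qᵀ D * fromBlocks P 0 K 1 =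
      fromBlocks (Pᵀ * X * P + Pᵀ * Q * K + Kᵀ * Qᵀ * P + Kᵀ * D * K) (Pᵀ * Q + Kᵀ * D)
        (Pᵀ * Q + Kᵀ * D)ᵀ D := by
  simp only [fromBlocks_transpose, transpose_zero, transpose_one, fromBlocks_multiply,
    Matrix.zero_mul, Matrix.one_mul, zero_add, one_mul, Matrix.add_mul, Matrix.mul_assoc,
    Matrix.mul_zero, Matrix.mul_one, mul_one, transpose_add, transpose_mul, transpose_transpose, hD,
    fromBlocks_inj, and_self, and_true]
  abel

end Matrix

theorem lmi_congruence_eq_controlled_block {n m l : Type*} [Fintype n] [Fintype m] [Fintype l]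
    [DecidableEq n] [DecidableEq m] {α β : ℝ} (hαβ : α ≠ β) {S : Matrix n n ℝ} (hS : Sᵀ = S)
    (hdet : IsUnit S.det) (A : Matrix n n ℝ) (g : Matrix n l ℝ) (Y : Matrix l n ℝ)
    (W1 : Matrix m n ℝ) (Wmin : Matrix n m ℝ) (γ : ℝ) :
    (fromBlocks S⁻¹ 0 ((α / (β - α)) • (Wminᵀ * S⁻¹) - α • W1) 1)ᵀ *
        fromBlocks (γ • S + (A * S + S * Aᵀ + g * Y + Yᵀ * gᵀ
            - (2 * α * β / (β - α) ^ 2) • (Wmin * Wminᵀ)))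
          (((α + β) / (β - α)) • Wmin + (β - α) • (S * W1ᵀ))
          (((α + β) / (β - α)) • Wmin + (β - α) • (S * W1ᵀ))ᵀ
          (-(2 : ℝ) • (1 : Matrix m m ℝ)) *
        fromBlocks S⁻¹ 0 ((α / (β - α)) • (Wminᵀ * S⁻¹) - α • W1) 1 =
      fromBlocks
        ((A + g * (Y * S⁻¹))ᵀ * S⁻¹ + S⁻¹ * (A + g * (Y * S⁻¹)) + γ • S⁻¹
          - (2 * α * β) • (W1ᵀ * W1))
        (S⁻¹ * Wmin + (α + β) • W1ᵀ)
        (S⁻¹ * Wmin + (α + β) • W1ᵀ)ᵀ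
        (-(2 : ℝ) • 1) := by
  have hd : β - α ≠ 0 := sub_ne_zero.2 hαβ.symm
  have hP : S⁻¹ᵀ = S⁻¹ := by rw [transpose_nonsing_inv, hS]
  have hoffdiag : S⁻¹ᵀ * (((α + β) / (β - α)) • Wmin + (β - α) • (S * W1ᵀ)) +
      ((α / (β - α)) • (Wminᵀ * S⁻¹) - α • W1)ᵀ * (-(2 : ℝ) • (1 : Matrix m m ℝ)) =
        S⁻¹ * Wmin + (α + β) • W1ᵀ := by
    simp only [transpose_sub, transpose_smul, transpose_mul, transpose_transpose, hP,
      Matrix.mul_add, Matrix.mul_smul, Matrix.mul_one,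
      nonsing_inv_mul_cancel_left _ _ hdet]
    match_scalars <;> field_simp <;> ring
  rw [transpose_fromBlocks_mul_fromBlocks_mul_fromBlocks _ _ (by simp), hoffdiag]
  congr 1
  simp only [transpose_add, transpose_sub, transpose_smul, transpose_mul, transpose_transpose,
    hS, hP, Matrix.mul_add, Matrix.add_mul, Matrix.sub_mul, Matrix.mul_sub, Matrix.smul_mul,
    Matrix.mul_smul, smul_add, smul_sub, smul_smul, Matrix.mul_assoc, Matrix.mul_one,
    Matrix.one_mul, nonsing_inv_mul_cancel_left _ _ hdet, nonsing_inv_mul _ hdet,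
    mul_nonsing_inv _ hdet]
  match_scalars <;> field_simp <;> ring

theorem LMI_implies_controlled_condition_general
    (n l m : ℕ) (α β : ℝ) (hαβ : α < β)
    (A : Matrix (Fin n) (Fin n) ℝ)
    (g : Matrix (Fin n) (Fin l) ℝ) (Y : Matrix (Fin l) (Fin n) ℝ)
    (W1 : Matrix (Fin m) (Fin n) ℝ) (Wmin : Matrix (Fin n) (Fin m) ℝ)
    (S : Matrix (Fin n) (Fin n) ℝ) (hS : S.PosDef)
    (s₁ μ : ℝ) (hμ : 0 < μ)
    (hSlo : (S - s₁ • (1 : Matrix (Fin n) (Fin n) ℝ)).PosSemidef)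
    (hLMI : (-(Matrix.fromBlocks
        (Matrix.fromBlocks (-μ • (1 : Matrix (Fin n) (Fin n) ℝ)) S
          S (A * S + S * Aᵀ + g * Y + Yᵀ * gᵀ
              - (2 * α * β / (β - α) ^ 2) • (Wmin * Wminᵀ)))
        (Matrix.fromRows (0 : Matrix (Fin n) (Fin m) ℝ)
          (((α + β) / (β - α)) • Wmin + (β - α) • (S * W1ᵀ)))
        (Matrix.fromCols (0 : Matrix (Fin m) (Fin n) ℝ)
          ((((α + β) / (β - α)) • Wmin + (β - α) • (S * W1ᵀ))ᵀ))
        (-(2 : ℝ) • (1 : Matrix (Fin m) (Fin m) ℝ)))).PosSemidef) :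
    (-(Matrix.fromBlocks
        ((A + g * (Y * S⁻¹))ᵀ * S⁻¹ + S⁻¹ * (A + g * (Y * S⁻¹))
            + (s₁ / μ) • S⁻¹ - (2 * α * β) • (W1ᵀ * W1))
        (S⁻¹ * Wmin + (α + β) • W1ᵀ)
        ((S⁻¹ * Wmin + (α + β) • W1ᵀ)ᵀ)
        (-(2 : ℝ) • (1 : Matrix (Fin m) (Fin m) ℝ)))).PosSemidef := by
  have hSt : Sᵀ = S := by simpa [conjTranspose_eq_transpose_of_trivial] using hS.isHermitian.eq
  have hdet : IsUnit S.det := (isUnit_iff_isUnit_det S).1 hS.isUnit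
  rw [← nonpos_iff_posSemidef_neg] at hLMI ⊢
  have hreduced := fromBlocks_add_inv_smul_mul_self_nonpos hμ.ne' hSt hLMI
  have hlowered := (fromBlocks_le_fromBlocks_left
    (add_le_add_left (smul_le_inv_smul_mul_self hS.posSemidef hSlo hμ.le) _) _ _ _).trans hreduced
  have hcongr := transpose_mul_mul_nonpos hlowered
    (fromBlocks S⁻¹ 0 ((α / (β - α)) • (Wminᵀ * S⁻¹) - α • W1) (1 : Matrix (Fin m) (Fin m) ℝ))
  rwa [lmi_congruence_eq_controlled_block hαβ.ne hSt hdet] at hcongr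

/-- the convex LMI in `(S, Y, μ)` implies, with `P = S⁻¹`, `H = Y S⁻¹`
and `γ = s̲/μ`, the non-convex matrix inequality of the controlled Hopfield system. -/
theorem LMI_implies_controlled_condition
    (n l m : ℕ) (α β : ℝ) (hαβ : α < β)
    (A : Matrix (Fin n) (Fin n) ℝ)
    (g : Matrix (Fin n) (Fin l) ℝ) (Y : Matrix (Fin l) (Fin n) ℝ)
    (W1 : Matrix (Fin m) (Fin n) ℝ) (Wmin : Matrix (Fin n) (Fin m) ℝ)
    (S : Matrix (Fin n) (Fin n) ℝ) (hS : S.PosDef)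
    (s₁ μ : ℝ) (hs₁ : 0 < s₁) (hμ : 0 < μ)
    (hSlo : (S - s₁ • (1 : Matrix (Fin n) (Fin n) ℝ)).PosSemidef)
    (hLMI : (-(Matrix.fromBlocks
        (Matrix.fromBlocks (-μ • (1 : Matrix (Fin n) (Fin n) ℝ)) S
          S (A * S + S * Aᵀ + g * Y + Yᵀ * gᵀ
              - (2 * α * β / (β - α) ^ 2) • (Wmin * Wminᵀ)))
        (Matrix.fromRows (0 : Matrix (Fin n) (Fin m) ℝ)
          (((α + β) / (β - α)) • Wmin + (β - α) • (S * W1ᵀ)))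
        (Matrix.fromCols (0 : Matrix (Fin m) (Fin n) ℝ)
          ((((α + β) / (β - α)) • Wmin + (β - α) • (S * W1ᵀ))ᵀ))
        (-(2 : ℝ) • (1 : Matrix (Fin m) (Fin m) ℝ)))).PosSemidef) :
    (-(Matrix.fromBlocks
        ((A + g * (Y * S⁻¹))ᵀ * S⁻¹ + S⁻¹ * (A + g * (Y * S⁻¹))
            + (s₁ / μ) • S⁻¹ - (2 * α * β) • (W1ᵀ * W1))
        (S⁻¹ * Wmin + (α + β) • W1ᵀ)
        ((S⁻¹ * Wmin + (α + β) • W1ᵀ)ᵀ)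
        (-(2 : ℝ) • (1 : Matrix (Fin m) (Fin m) ℝ)))).PosSemidef :=
  LMI_implies_controlled_condition_general n l m α β hαβ A g Y W1 Wmin S hS s₁ μ hμ hSlo hLMI
end
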